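/- In the setting of the previous statement, consider the population linear regression of Y on (1, D, (S/n)(1−D), (S/n)D) and let γ_ℓ^d be the coefficient on (S/n)·1(D=d) for d ∈ {0,1}. Then γ_ℓ^d = n Σ_{s=1}^{n} θ_s(d) (s − E[S]) P[S=s] / Var(S). -/

import Mathlib

/-!
The interacted regression fits one line in `S` per treatment arm. Its first-order conditions see
`Y` only through the cell means `μ(d, s) = E[Y | D = d, S = s]`, and as `D ⊥ S` the conditions of
arm `d` are the normal equations of the least-squares fit of `s ↦ μ(d, s)` under the law of `S`.
So the slope is `Cov(S, μ(d, S)) / Var S`; the part of `μ(d, ·)` that does not depend on `s`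
drops out of the covariance, leaving `∑ θ_s(d) (s - E S) P[S = s]`.
-/

open MeasureTheory ProbabilityTheory Finset
open scoped ProbabilityTheory

section FirstOrderCondition

variable {Ω : Type*} [MeasurableSpace Ω] {μ : Measure Ω}

theorem integral_mul_eq_zero_of_forall_integral_sq_le {R Z : Ω → ℝ}
    (hR : MemLp R 2 μ) (hZ : MemLp Z 2 μ)
    (hmin : ∀ t : ℝ, ∫ ω, R ω ^ 2 ∂μ ≤ ∫ ω, (R ω - t * Z ω) ^ 2 ∂μ) :
    ∫ ω, R ω * Z ω ∂μ = 0 := by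
  have hexpand (t : ℝ) : ∫ ω, (R ω - t * Z ω) ^ 2 ∂μ = ∫ ω, R ω ^ 2 ∂μ
      + (-2 * ∫ ω, R ω * Z ω ∂μ) * t + (∫ ω, Z ω ^ 2 ∂μ) * (t * t) := by
    have hRZ : Integrable (fun ω => -2 * t * (R ω * Z ω)) μ :=
      (hR.integrable_mul hZ).const_mul _
    have hZZ : Integrable (fun ω => t * t * Z ω ^ 2) μ := hZ.integrable_sq.const_mul _
    have hRR : Integrable (fun ω => R ω ^ 2 + -2 * t * (R ω * Z ω)) μ :=
      hR.integrable_sq.add hRZ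
    calc ∫ ω, (R ω - t * Z ω) ^ 2 ∂μ
        = ∫ ω, (R ω ^ 2 + -2 * t * (R ω * Z ω)) + t * t * Z ω ^ 2 ∂μ :=
          integral_congr_ae (ae_of_all _ fun ω => by ring)
      _ = _ := by
          rw [integral_add hRR hZZ, integral_add hR.integrable_sq hRZ,
            integral_const_mul, integral_const_mul]
          ring
  -- `t ↦ ∫ (R - t Z)² - ∫ R²` is a nonnegative quadratic with no constant term
  have hdisc := discrim_le_zero (a := ∫ ω, Z ω ^ 2 ∂μ) (b := -2 * ∫ ω, R ω * Z ω ∂μ) (c := 0)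
    fun t => by linarith [hmin t, hexpand t]
  rw [discrim] at hdisc
  nlinarith [sq_nonneg (∫ ω, R ω * Z ω ∂μ)]

end FirstOrderCondition

section Fibers

variable {Ω α : Type*} [MeasurableSpace Ω] {μ : Measure Ω} [MeasurableSpace α]
  [DiscreteMeasurableSpace α] {f : Ω → α} {s : Finset α}

theorem integral_eq_sum_setIntegral_fiber (hf : Measurable f) (hfs : ∀ ω, f ω ∈ s)
    {g : Ω → ℝ} (hg : Integrable g μ) :
    ∫ ω, g ω ∂μ = ∑ a ∈ s, ∫ ω in f ⁻¹' {a}, g ω ∂μ := by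
  have hcover : ⋃ a ∈ s, f ⁻¹' {a} = Set.univ :=
    Set.eq_univ_of_forall fun ω => Set.mem_biUnion (hfs ω) rfl
  rw [← integral_biUnion_finset s (fun a _ => hf (measurableSet_singleton a))
    (Set.pairwiseDisjoint_fiber f s) (fun a _ => hg.integrableOn), hcover, setIntegral_univ]

theorem memLp_comp_of_forall_mem [IsFiniteMeasure μ] (hf : Measurable f) (hfs : ∀ ω, f ω ∈ s)
    (G : α → ℝ) (p : ENNReal) : MemLp (fun ω => G (f ω)) p μ :=
  .of_bound (Measurable.of_discrete.comp hf).aestronglyMeasurable (∑ a ∈ s, ‖G a‖)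
    (ae_of_all _ fun ω => single_le_sum (fun a _ => norm_nonneg (G a)) (hfs ω))

theorem integral_comp_eq_sum [IsFiniteMeasure μ] (hf : Measurable f) (hfs : ∀ ω, f ω ∈ s)
    (G : α → ℝ) : ∫ ω, G (f ω) ∂μ = ∑ a ∈ s, G a * μ.real (f ⁻¹' {a}) := by
  rw [integral_eq_sum_setIntegral_fiber hf hfs
    ((memLp_comp_of_forall_mem hf hfs G 1).integrable le_rfl)]
  refine sum_congr rfl fun a _ => ?_
  rw [setIntegral_congr_fun (hf (measurableSet_singleton a)) fun ω (hω : f ω = a) => by rw [hω],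
    setIntegral_const, smul_eq_mul, mul_comm]

theorem integral_sub_comp_mul_comp_eq_sum [IsFiniteMeasure μ] (hf : Measurable f)
    (hfs : ∀ ω, f ω ∈ s) {Y : Ω → ℝ} (hY : Integrable Y μ) {m : α → ℝ}
    (hm : ∀ a ∈ s, ∫ ω in f ⁻¹' {a}, Y ω ∂μ = m a * μ.real (f ⁻¹' {a})) (F G : α → ℝ) :
    ∫ ω, (Y ω - F (f ω)) * G (f ω) ∂μ = ∑ a ∈ s, G a * (m a - F a) * μ.real (f ⁻¹' {a}) := by
  have hint : Integrable (fun ω => (Y ω - F (f ω)) * G (f ω)) μ :=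
    (hY.sub ((memLp_comp_of_forall_mem hf hfs F 1).integrable le_rfl)).mul_of_top_left
      (memLp_comp_of_forall_mem hf hfs G ⊤)
  rw [integral_eq_sum_setIntegral_fiber hf hfs hint]
  refine sum_congr rfl fun a ha => ?_
  have hfiber := hf (measurableSet_singleton a)
  rw [setIntegral_congr_fun hfiber fun ω (hω : f ω = a) => by rw [hω],
    integral_mul_const, integral_sub hY.integrableOn (integrableOn_const (measure_ne_top _ _)),
    setIntegral_const, hm a ha, smul_eq_mul]
  ring

end Fibers

theorem sum_sub_weightedMean_mul_eq_zero {ι : Type*} (s : Finset ι) {w : ι → ℝ}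
    (hw : ∑ i ∈ s, w i = 1) (x : ι → ℝ) :
    ∑ i ∈ s, (x i - ∑ j ∈ s, x j * w j) * w i = 0 := by
  simp only [sub_mul, sum_sub_distrib, ← mul_sum, hw, mul_one, sub_self]

/-- `h₀`, `h₁` are the normal equations of the weighted least-squares fit of `y` on `(1, x)`:
its slope is the weighted covariance over the weighted variance. -/
theorem slope_mul_sum_sq_eq_sum {ι : Type*} (s : Finset ι) {w x y : ι → ℝ}
    (hw : ∑ i ∈ s, w i = 1) {α β : ℝ}
    (h₀ : ∑ i ∈ s, (y i - (α + β * x i)) * w i = 0)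
    (h₁ : ∑ i ∈ s, x i * (y i - (α + β * x i)) * w i = 0) :
    β * ∑ i ∈ s, (x i - ∑ j ∈ s, x j * w j) ^ 2 * w i
      = ∑ i ∈ s, y i * (x i - ∑ j ∈ s, x j * w j) * w i := by
  have hcentered := sum_sub_weightedMean_mul_eq_zero s hw x
  set mx := ∑ j ∈ s, x j * w j
  rw [← sub_eq_zero]
  calc _ = ∑ i ∈ s, (mx * ((y i - (α + β * x i)) * w i) - x i * (y i - (α + β * x i)) * w i
          - (α + β * mx) * ((x i - mx) * w i)) := by
        rw [mul_sum, ← sum_sub_distrib]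
        exact sum_congr rfl fun i _ => by ring
    _ = 0 := by
        rw [sum_sub_distrib, sum_sub_distrib, ← mul_sum, ← mul_sum, h₀, h₁, hcentered]
        ring

theorem sum_range_const_add_ite_mul {n : ℕ} {w : ℕ → ℝ} (hw : ∑ s ∈ range (n + 1), w s = 0)
    (κ : ℝ) (θ : ℕ → ℝ) :
    ∑ s ∈ range (n + 1), (κ + if 1 ≤ s then θ s else 0) * w s = ∑ s ∈ Icc 1 n, θ s * w s := by
  have hfilter : (range (n + 1)).filter (1 ≤ ·) = Icc 1 n := by
    ext s; simp only [mem_filter, mem_range, mem_Icc]; omega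
  simp only [add_mul, sum_add_distrib, ← mul_sum, hw, mul_zero, zero_add, ite_mul, zero_mul,
    ← sum_filter, hfilter]

/-- One line in `s` per treatment arm `d`. The regressors `(1, D, (S/n)(1-D), (S/n)D)` span the
same functions of `(D, S)`: coefficients `(a, b, c₀, c₁)` give `α = (a, a + b)` and
`β = (c₀/n, c₁/n)`. -/
def armFit (α β : Bool → ℝ) (x : Bool × ℕ) : ℝ := α x.1 + β x.1 * x.2

theorem armFit_add_smul (α β α₁ β₁ : Bool → ℝ) (t : ℝ) (x : Bool × ℕ) :
    armFit (α + t • α₁) (β + t • β₁) x = armFit α β x + t * armFit α₁ β₁ x := by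
  simp only [armFit, Pi.add_apply, Pi.smul_apply, smul_eq_mul]
  ring

section InteractedRegression

variable {Ω : Type*} [MeasureSpace Ω] [IsProbabilityMeasure (ℙ : Measure Ω)]
  {n : ℕ} {D : Ω → Bool} {S : Ω → ℕ}

theorem integral_residual_mul_ite_eq (hD : Measurable D) (hS : Measurable S)
    (hSle : ∀ ω, S ω ≤ n) (hindep : IndepFun D S) {Y : Ω → ℝ} (hY : Integrable Y)
    {m : Bool × ℕ → ℝ}
    (hm : ∀ d, ∀ s ≤ n,
      ∫ ω in {ω | D ω = d ∧ S ω = s}, Y ω = m (d, s) * (ℙ {ω | D ω = d ∧ S ω = s}).toReal)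
    (F : Bool × ℕ → ℝ) (d₀ : Bool) (g : ℕ → ℝ) :
    ∫ ω, (Y ω - F (D ω, S ω)) * (if D ω = d₀ then g (S ω) else 0)
      = (ℙ {ω | D ω = d₀}).toReal *
          ∑ s ∈ range (n + 1), g s * (m (d₀, s) - F (d₀, s)) * (ℙ {ω | S ω = s}).toReal := by
  have hcell (d : Bool) (s : ℕ) :
      (fun ω => (D ω, S ω)) ⁻¹' {(d, s)} = {ω | D ω = d ∧ S ω = s} :=
    Set.ext fun _ => Prod.ext_iff
  have hfactor (d : Bool) (s : ℕ) : (ℙ {ω | D ω = d ∧ S ω = s}).toReal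
      = (ℙ {ω | D ω = d}).toReal * (ℙ {ω | S ω = s}).toReal := by
    rw [← ENNReal.toReal_mul]
    exact congrArg ENNReal.toReal (hindep.measure_inter_preimage_eq_mul _ _
      (measurableSet_singleton d) (measurableSet_singleton s))
  have hmem (ω : Ω) : (D ω, S ω) ∈ (univ ×ˢ range (n + 1) : Finset (Bool × ℕ)) :=
    mem_product.2 ⟨mem_univ _, mem_range.2 (Nat.lt_succ_of_le (hSle ω))⟩
  rw [integral_sub_comp_mul_comp_eq_sum (hD.prodMk hS) hmem hY (m := m)
    (fun x hx => by
      rw [hcell]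
      exact hm x.1 x.2 (Nat.lt_succ_iff.1 (mem_range.1 (mem_product.1 hx).2)))
    F (fun x => if x.1 = d₀ then g x.2 else 0)]
  rw [sum_product, sum_comm]
  simp only [ite_mul, zero_mul, sum_ite_eq', mem_univ, if_true, mul_sum]
  exact sum_congr rfl fun s _ => by rw [hcell, measureReal_def, hfactor]; ring

theorem sum_range_toReal_measure_eq_one (hS : Measurable S) (hSle : ∀ ω, S ω ≤ n) :
    ∑ s ∈ range (n + 1), (ℙ {ω | S ω = s}).toReal = 1 := by
  have h := integral_comp_eq_sum (μ := ℙ) hS (s := range (n + 1))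
    (fun ω => mem_range.2 (Nat.lt_succ_of_le (hSle ω))) fun _ => (1 : ℝ)
  simp only [integral_const, probReal_univ, smul_eq_mul, one_mul] at h
  exact h.symm

theorem variance_natCast_eq_sum (hS : Measurable S) (hSle : ∀ ω, S ω ≤ n) :
    variance (fun ω => (S ω : ℝ)) ℙ
      = ∑ s ∈ range (n + 1), ((s : ℝ) - ∫ ω, (S ω : ℝ)) ^ 2 * (ℙ {ω | S ω = s}).toReal := by
  rw [variance_eq_integral (X := fun ω => (S ω : ℝ)) (measurable_from_top.comp hS).aemeasurable]
  exact integral_comp_eq_sum hS (fun ω => mem_range.2 (Nat.lt_succ_of_le (hSle ω)))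
    fun s : ℕ => ((s : ℝ) - ∫ ω, (S ω : ℝ)) ^ 2

theorem sum_natCast_sub_integral_mul_eq_zero (hS : Measurable S) (hSle : ∀ ω, S ω ≤ n) :
    ∑ s ∈ range (n + 1), ((s : ℝ) - ∫ ω, (S ω : ℝ)) * (ℙ {ω | S ω = s}).toReal = 0 := by
  rw [integral_comp_eq_sum hS (fun ω => mem_range.2 (Nat.lt_succ_of_le (hSle ω))) Nat.cast]
  exact sum_sub_weightedMean_mul_eq_zero _ (sum_range_toReal_measure_eq_one hS hSle) _

theorem armFit_normal_equations (hD : Measurable D) (hS : Measurable S) (hSle : ∀ ω, S ω ≤ n)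
    (hindep : IndepFun D S) {Y : Ω → ℝ} (hY : MemLp Y 2) {m : Bool × ℕ → ℝ}
    (hm : ∀ d, ∀ s ≤ n,
      ∫ ω in {ω | D ω = d ∧ S ω = s}, Y ω = m (d, s) * (ℙ {ω | D ω = d ∧ S ω = s}).toReal)
    (harm : ∀ d, (ℙ {ω | D ω = d}).toReal ≠ 0) {α β : Bool → ℝ}
    (hLS : ∀ α' β', ∫ ω, (Y ω - armFit α β (D ω, S ω)) ^ 2
      ≤ ∫ ω, (Y ω - armFit α' β' (D ω, S ω)) ^ 2) (d : Bool) :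
    ∑ s ∈ range (n + 1), (m (d, s) - armFit α β (d, s)) * (ℙ {ω | S ω = s}).toReal = 0 ∧
    ∑ s ∈ range (n + 1), (s : ℝ) * (m (d, s) - armFit α β (d, s)) * (ℙ {ω | S ω = s}).toReal
      = 0 := by
  have hX : Measurable fun ω => (D ω, S ω) := hD.prodMk hS
  have hmem (ω : Ω) : (D ω, S ω) ∈ (univ ×ˢ range (n + 1) : Finset (Bool × ℕ)) :=
    mem_product.2 ⟨mem_univ _, mem_range.2 (Nat.lt_succ_of_le (hSle ω))⟩
  have hnormal (α₁ β₁ : Bool → ℝ) :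
      ∫ ω, (Y ω - armFit α β (D ω, S ω)) * armFit α₁ β₁ (D ω, S ω) = 0 :=
    integral_mul_eq_zero_of_forall_integral_sq_le
      (hY.sub (memLp_comp_of_forall_mem hX hmem (armFit α β) 2))
      (memLp_comp_of_forall_mem hX hmem (armFit α₁ β₁) 2) fun t => by
        simpa only [armFit_add_smul, sub_add_eq_sub_sub] using hLS (α + t • α₁) (β + t • β₁)
  have hsum (α₁ β₁ : Bool → ℝ) (g : ℕ → ℝ)
      (hdir : ∀ d' s, armFit α₁ β₁ (d', s) = if d' = d then g s else 0) :
      ∑ s ∈ range (n + 1), g s * (m (d, s) - armFit α β (d, s)) * (ℙ {ω | S ω = s}).toReal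
        = 0 := by
    have h := integral_residual_mul_ite_eq hD hS hSle hindep (hY.integrable one_le_two) hm
      (armFit α β) d g
    simp only [← hdir, hnormal] at h
    exact (mul_eq_zero.1 h.symm).resolve_left (harm d)
  constructor
  · simpa only [one_mul] using hsum (fun d' => if d' = d then 1 else 0) 0 (fun _ => 1)
      fun _ _ => by simp [armFit]
  · exact hsum 0 (fun d' => if d' = d then 1 else 0) (↑)
      fun _ _ => by simp [armFit]

theorem armFit_slope_mul_variance_eq (hD : Measurable D) (hS : Measurable S) (hSle : ∀ ω, S ω ≤ n)
    (hindep : IndepFun D S) {Y : Ω → ℝ} (hY : MemLp Y 2) {m : Bool × ℕ → ℝ}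
    (hm : ∀ d, ∀ s ≤ n,
      ∫ ω in {ω | D ω = d ∧ S ω = s}, Y ω = m (d, s) * (ℙ {ω | D ω = d ∧ S ω = s}).toReal)
    (harm : ∀ d, (ℙ {ω | D ω = d}).toReal ≠ 0) {α β : Bool → ℝ}
    (hLS : ∀ α' β', ∫ ω, (Y ω - armFit α β (D ω, S ω)) ^ 2
      ≤ ∫ ω, (Y ω - armFit α' β' (D ω, S ω)) ^ 2) (d : Bool) :
    β d * variance (fun ω => (S ω : ℝ)) ℙ
      = ∑ s ∈ range (n + 1), m (d, s) * ((s : ℝ) - ∫ ω, (S ω : ℝ)) * (ℙ {ω | S ω = s}).toReal := by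
  obtain ⟨h₀, h₁⟩ := armFit_normal_equations hD hS hSle hindep hY hm harm hLS d
  simp only [armFit] at h₀ h₁
  rw [variance_natCast_eq_sum hS hSle,
    integral_comp_eq_sum hS (fun ω => mem_range.2 (Nat.lt_succ_of_le (hSle ω))) Nat.cast]
  exact slope_mul_sum_sq_eq_sum _ (sum_range_toReal_measure_eq_one hS hSle) h₀ h₁

theorem eq_mul_sum_Icc_of_div_mul_variance_eq (hS : Measurable S) (hSle : ∀ ω, S ω ≤ n)
    (hvar : variance (fun ω => (S ω : ℝ)) ℙ ≠ 0) (hn : (n : ℝ) ≠ 0) {c : ℝ} (κ : ℝ)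
    {θ : ℕ → ℝ} (h : c / n * variance (fun ω => (S ω : ℝ)) ℙ
      = ∑ s ∈ range (n + 1), (κ + if 1 ≤ s then θ s else 0)
          * ((s : ℝ) - ∫ ω, (S ω : ℝ)) * (ℙ {ω | S ω = s}).toReal) :
    c = n * ∑ s ∈ Icc 1 n, θ s * (((s : ℝ) - ∫ ω, (S ω : ℝ)) * (ℙ {ω | S ω = s}).toReal /
      variance (fun ω => (S ω : ℝ)) ℙ) := by
  simp only [mul_assoc] at h
  rw [sum_range_const_add_ite_mul (sum_natCast_sub_integral_mul_eq_zero hS hSle)] at h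
  simp only [mul_div_assoc']
  rw [← sum_div, ← h, mul_div_cancel_right₀ _ hvar, mul_div_cancel₀ _ hn]

end InteractedRegression

theorem stmt_7_general {Ω : Type*} [MeasureSpace Ω] [IsProbabilityMeasure (ℙ : Measure Ω)]
    (n : ℕ) (hn : 1 ≤ n) (Y : Ω → ℝ) (D : Ω → Bool) (S : Ω → ℕ)
    (hDmeas : Measurable D) (hSmeas : Measurable S)
    (hint : Integrable Y) (hint2 : Integrable (fun ω => (Y ω) ^ 2))
    (hSle : ∀ ω, S ω ≤ n)
    (hindep : IndepFun D S ℙ)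
    (hvar : 0 < variance (fun ω => (S ω : ℝ)) ℙ)
    (hpos : ∀ (d : Bool) (s : ℕ), s ≤ n → 0 < ℙ {ω | D ω = d ∧ S ω = s})
    (μ00 τ0 : ℝ) (θ0 θ1 : ℕ → ℝ)
    (hmodel : ∀ (d : Bool) (s : ℕ), s ≤ n →
      (∫ ω in {ω | D ω = d ∧ S ω = s}, Y ω) /
        (ℙ {ω | D ω = d ∧ S ω = s}).toReal
        = μ00 + τ0 * (if d then 1 else 0) +
          (if 1 ≤ s then (if d then θ1 s else θ0 s) else 0))
    (a b c0 c1 : ℝ)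
    (hmin : ∀ a' b' c0' c1' : ℝ,
      (∫ ω, (Y ω - a - b * (if D ω then 1 else 0)
          - c0 * ((S ω : ℝ) / n) * (1 - (if D ω then 1 else 0))
          - c1 * ((S ω : ℝ) / n) * (if D ω then 1 else 0)) ^ 2) ≤
      (∫ ω, (Y ω - a' - b' * (if D ω then 1 else 0)
          - c0' * ((S ω : ℝ) / n) * (1 - (if D ω then 1 else 0))
          - c1' * ((S ω : ℝ) / n) * (if D ω then 1 else 0)) ^ 2)) :
    (c0 = n * ∑ s ∈ Finset.Icc 1 n,
        θ0 s * (((s : ℝ) - ∫ ω, (S ω : ℝ)) * (ℙ {ω | S ω = s}).toReal /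
          variance (fun ω => (S ω : ℝ)) ℙ))
    ∧
    (c1 = n * ∑ s ∈ Finset.Icc 1 n,
        θ1 s * (((s : ℝ) - ∫ ω, (S ω : ℝ)) * (ℙ {ω | S ω = s}).toReal /
          variance (fun ω => (S ω : ℝ)) ℙ)) := by
  have hn0 : (n : ℝ) ≠ 0 := Nat.cast_ne_zero.2 (by omega)
  have hcell (d : Bool) (s : ℕ) (hs : s ≤ n) : ∫ ω in {ω | D ω = d ∧ S ω = s}, Y ω
      = (μ00 + τ0 * (if d then 1 else 0) + if 1 ≤ s then (if d then θ1 s else θ0 s) else 0)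
        * (ℙ {ω | D ω = d ∧ S ω = s}).toReal := by
    rw [← hmodel d s hs,
      div_mul_cancel₀ _ (ENNReal.toReal_pos (hpos d s hs).ne' (measure_ne_top _ _)).ne']
  have harm (d : Bool) : (ℙ {ω | D ω = d}).toReal ≠ 0 :=
    (ENNReal.toReal_pos ((hpos d 0 n.zero_le).trans_le (measure_mono fun _ h => h.1)).ne'
      (measure_ne_top _ _)).ne'
  have hLS (α' β' : Bool → ℝ) :
      ∫ ω, (Y ω - armFit (fun d => if d then a + b else a)
        (fun d => if d then c1 / n else c0 / n) (D ω, S ω)) ^ 2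
      ≤ ∫ ω, (Y ω - armFit α' β' (D ω, S ω)) ^ 2 := by
    convert hmin (α' false) (α' true - α' false) (n * β' false) (n * β' true) using 2 <;>
      funext ω <;> cases D ω <;> simp only [armFit, Bool.false_eq_true, ↓reduceIte] <;>
      field_simp <;> ring
  have hslope := armFit_slope_mul_variance_eq hDmeas hSmeas hSle hindep
    ((memLp_two_iff_integrable_sq hint.1).2 hint2)
    (m := fun x => μ00 + τ0 * (if x.1 then 1 else 0) +
      if 1 ≤ x.2 then (if x.1 then θ1 x.2 else θ0 x.2) else 0) hcell harm hLS
  exact ⟨eq_mul_sum_Icc_of_div_mul_variance_eq hSmeas hSle hvar.ne' hn0 μ00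
      (by simpa using hslope false),
    eq_mul_sum_Icc_of_div_mul_variance_eq hSmeas hSle hvar.ne' hn0 (μ00 + τ0)
      (by simpa using hslope true)⟩

/-- Lemma 7 (LIM with interactions): the coefficients on `(S/n)(1−D)` and `(S/n)D` in the
interacted linear-in-means regression are signed linear combinations of the spillover
effects under control and treatment, respectively. -/
theorem stmt_7 {Ω : Type*} [MeasureSpace Ω] [IsProbabilityMeasure (ℙ : Measure Ω)]
    (n : ℕ) (hn : 1 ≤ n) (Y : Ω → ℝ) (D : Ω → Bool) (S : Ω → ℕ)
    (hYmeas : Measurable Y) (hDmeas : Measurable D) (hSmeas : Measurable S)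
    (hint : Integrable Y) (hint2 : Integrable (fun ω => (Y ω) ^ 2))
    (hSle : ∀ ω, S ω ≤ n)
    (p : ℝ) (hp0 : 0 < p) (hp1 : p < 1)
    (hBern : (ℙ {ω | D ω = true}).toReal = p)
    (hindep : IndepFun D S ℙ)
    (hvar : 0 < variance (fun ω => (S ω : ℝ)) ℙ)
    (hpos : ∀ (d : Bool) (s : ℕ), s ≤ n → 0 < ℙ {ω | D ω = d ∧ S ω = s})
    (μ00 τ0 : ℝ) (θ0 θ1 : ℕ → ℝ)
    (hmodel : ∀ (d : Bool) (s : ℕ), s ≤ n →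
      (∫ ω in {ω | D ω = d ∧ S ω = s}, Y ω) /
        (ℙ {ω | D ω = d ∧ S ω = s}).toReal
        = μ00 + τ0 * (if d then 1 else 0) +
          (if 1 ≤ s then (if d then θ1 s else θ0 s) else 0))
    (a b c0 c1 : ℝ)
    (hmin : ∀ a' b' c0' c1' : ℝ,
      (∫ ω, (Y ω - a - b * (if D ω then 1 else 0)
          - c0 * ((S ω : ℝ) / n) * (1 - (if D ω then 1 else 0))
          - c1 * ((S ω : ℝ) / n) * (if D ω then 1 else 0)) ^ 2) ≤
      (∫ ω, (Y ω - a' - b' * (if D ω then 1 else 0)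
          - c0' * ((S ω : ℝ) / n) * (1 - (if D ω then 1 else 0))
          - c1' * ((S ω : ℝ) / n) * (if D ω then 1 else 0)) ^ 2)) :
    (c0 = n * ∑ s ∈ Finset.Icc 1 n,
        θ0 s * (((s : ℝ) - ∫ ω, (S ω : ℝ)) * (ℙ {ω | S ω = s}).toReal /
          variance (fun ω => (S ω : ℝ)) ℙ))
    ∧
    (c1 = n * ∑ s ∈ Finset.Icc 1 n,
        θ1 s * (((s : ℝ) - ∫ ω, (S ω : ℝ)) * (ℙ {ω | S ω = s}).toReal /
          variance (fun ω => (S ω : ℝ)) ℙ)) :=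
  stmt_7_general n hn Y D S hDmeas hSmeas hint hint2 hSle hindep hvar hpos μ00 τ0 θ0 θ1 hmodel a b
    c0 c1 hmin
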